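/- Consistency of the sandwich variance estimator. In the two-stage LAGO setup, let (β̂_n) be B-valued random vectors with β̂_n → β* in probability. Define Ĵ_n := Σ_{j≤J₁} (n_j^{(1)}(n)/n) h′(⟨β̂_n, x_j^{(1)}⟩)² x_j^{(1)} (x_j^{(1)})ᵀ + Σ_{j≤J₂} (n_j^{(2)}(n)/n) h′(⟨β̂_n, X_j^{(2,n)}⟩)² X_j^{(2,n)} (X_j^{(2,n)})ᵀ and V̂_n := (1/n) Σ_{j≤J₁} h′(⟨β̂_n, x_j^{(1)}⟩)² x_j^{(1)} (x_j^{(1)})ᵀ Σ_{i≤n_j^{(1)}(n)} (Y_{ij}^{(1)} − h(⟨β̂_n, x_j^{(1)}⟩))² + (1/n) Σ_{j≤J₂} h′(⟨β̂_n, X_j^{(2,n)}⟩)² X_j^{(2,n)} (X_j^{(2,n)})ᵀ Σ_{i≤n_j^{(2)}(n)} (Y_{ij}^{(2,n)} − h(⟨β̂_n, X_j^{(2,n)}⟩))². Then Ĵ_n → J(β*) and V̂_n → V(β*) entrywise in probability as n → ∞, where J(β*) := Σ_{k=1,2} Σ_j α_{jk} h′(⟨β*, x_j^{(k)}⟩)²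 x_j^{(k)} (x_j^{(k)})ᵀ and V(β*) := Σ_{k=1,2} Σ_j α_{jk} σ_k²(j) h′(⟨β*, x_j^{(k)}⟩)² x_j^{(k)} (x_j^{(k)})ᵀ. -/

import Mathlib

open MeasureTheory ProbabilityTheory Filter
open scoped RealInnerProductSpace BigOperators NNReal Topology ENNReal

noncomputable section

/-- Concatenate `(1, a, z)` into a design vector in `ℝ^(1+P+Q)`. -/
def designVec {P Q : ℕ} (a : EuclideanSpace ℝ (Fin P)) (z : EuclideanSpace ℝ (Fin Q)) :
    EuclideanSpace ℝ (Fin (1 + P + Q)) :=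
  (EuclideanSpace.equiv (Fin (1 + P + Q)) ℝ).symm
    (Fin.append (Fin.append ![(1 : ℝ)] ((EuclideanSpace.equiv (Fin P) ℝ) a))
      ((EuclideanSpace.equiv (Fin Q) ℝ) z))

/-- The two-stage LAGO setup. -/
structure LagoSetup (Ω : Type) [MeasurableSpace Ω] (Pr : Measure Ω) (J1 J2 P Q : ℕ) where
  hJ1 : 1 ≤ J1
  hJ2 : 1 ≤ J2
  hP : 1 ≤ P
  hQ : 1 ≤ Q
  /-- stage-1 interventions -/
  a1 : Fin J1 → EuclideanSpace ℝ (Fin P)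
  /-- stage-1 center covariates -/
  z1 : Fin J1 → EuclideanSpace ℝ (Fin Q)
  /-- limit stage-2 interventions -/
  a2 : Fin J2 → EuclideanSpace ℝ (Fin P)
  /-- stage-2 center covariates -/
  z2 : Fin J2 → EuclideanSpace ℝ (Fin Q)
  /-- random stage-2 interventions, for each total sample size `n` -/
  A2 : ℕ → Fin J2 → Ω → EuclideanSpace ℝ (Fin P)
  measA2 : ∀ n j, Measurable (A2 n j)
  /-- per-center sample sizes, stage 1 -/
  n1 : ℕ → Fin J1 → ℕ
  /-- per-center sample sizes, stage 2 -/
  n2 : ℕ → Fin J2 → ℕ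
  sum_sizes : ∀ n, (∑ j, n1 n j) + (∑ j, n2 n j) = n
  α1 : Fin J1 → ℝ
  α2 : Fin J2 → ℝ
  α1_pos : ∀ j, 0 < α1 j
  α2_pos : ∀ j, 0 < α2 j
  α1_lim : ∀ j, Tendsto (fun n : ℕ => (n1 n j : ℝ) / n) atTop (𝓝 (α1 j))
  α2_lim : ∀ j, Tendsto (fun n : ℕ => (n2 n j : ℝ) / n) atTop (𝓝 (α2 j))
  /-- the mean function (inverse link) -/
  h : ℝ → ℝ
  h_smooth : ContDiff ℝ 2 h
  /-- the (compact) parameter space -/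
  B : Set (EuclideanSpace ℝ (Fin (1 + P + Q)))
  B_compact : IsCompact B
  /-- the true parameter -/
  βstar : EuclideanSpace ℝ (Fin (1 + P + Q))
  βstar_mem : βstar ∈ B
  /-- stage-1 errors -/
  ε1 : Fin J1 → ℕ → Ω → ℝ
  /-- realized stage-2 errors -/
  ε2n : ℕ → Fin J2 → ℕ → Ω → ℝ
  /-- coupled i.i.d. stage-2 error arrays -/
  ε2 : Fin J2 → ℕ → Ω → ℝ
  meas_ε1 : ∀ j i, Measurable (ε1 j i)
  meas_ε2n : ∀ n j i, Measurable (ε2n n j i)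
  meas_ε2 : ∀ j i, Measurable (ε2 j i)
  /-- stage-1 error variances σ₁²(j) -/
  var1 : Fin J1 → ℝ
  /-- stage-2 error variances σ₂²(j) -/
  var2 : Fin J2 → ℝ
  /-- Assumption 3: convergence in probability of the stage-2 interventions -/
  A2_tendsto : ∀ j, TendstoInMeasure Pr (fun n => A2 n j) atTop (fun _ => a2 j)
  /-- Assumption 4: all interventions and errors take values in one compact set -/
  bound : ℝ
  A2_bdd : ∀ n j ω, ‖A2 n j ω‖ ≤ bound
  ε1_bdd : ∀ j i ω, |ε1 j i ω| ≤ bound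
  ε2n_bdd : ∀ n j i ω, |ε2n n j i ω| ≤ bound
  ε2_bdd : ∀ j i ω, |ε2 j i ω| ≤ bound
  /-- identical distribution within each error array -/
  ε1_ident : ∀ j i, IdentDistrib (ε1 j i) (ε1 j 0) Pr Pr
  ε2_ident : ∀ j i, IdentDistrib (ε2 j i) (ε2 j 0) Pr Pr
  ε1_mean : ∀ j i, ∫ ω, ε1 j i ω ∂Pr = 0
  ε2_mean : ∀ j i, ∫ ω, ε2 j i ω ∂Pr = 0
  ε1_var : ∀ j i, ∫ ω, (ε1 j i ω) ^ 2 ∂Pr = var1 j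
  ε2_var : ∀ j i, ∫ ω, (ε2 j i ω) ^ 2 ∂Pr = var2 j
  /-- all ε¹ and ε² variables are mutually independent -/
  ε_indep : iIndepFun
      (Sum.elim (fun p : Fin J1 × ℕ => fun ω => ε1 p.1 p.2 ω)
        (fun p : Fin J2 × ℕ => fun ω => ε2 p.1 p.2 ω)) Pr
  /-- the coupled ε² arrays are independent of (ε¹, (A_j^{(2,n)})_{j,n}) -/
  ε2_indep_rest : IndepFun
      (fun ω => (fun p : Fin J2 × ℕ => ε2 p.1 p.2 ω))
      (fun ω => ((fun p : Fin J1 × ℕ => ε1 p.1 p.2 ω),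
        (fun q : ℕ × Fin J2 => A2 q.1 q.2 ω))) Pr
  /-- Assumption 5: joint-law equality between realized and coupled errors -/
  jointLaw : ∀ n,
    Measure.map (fun ω => ((fun p : Fin J1 × ℕ => ε1 p.1 p.2 ω),
        (fun j => A2 n j ω), (fun p : Fin J2 × ℕ => ε2n n p.1 p.2 ω))) Pr
    = Measure.map (fun ω => ((fun p : Fin J1 × ℕ => ε1 p.1 p.2 ω),
        (fun j => A2 n j ω), (fun p : Fin J2 × ℕ => ε2 p.1 p.2 ω))) Pr

namespace LagoSetup

variable {Ω : Type} [MeasurableSpace Ω] {Pr : Measure Ω} {J1 J2 P Q : ℕ}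

/-- stage-1 design vectors x_j^{(1)} = (1, a_j^{(1)}, z_j^{(1)}) -/
def x1v (S : LagoSetup Ω Pr J1 J2 P Q) (j : Fin J1) : EuclideanSpace ℝ (Fin (1 + P + Q)) :=
  designVec (S.a1 j) (S.z1 j)

/-- limit stage-2 design vectors x_j^{(2)} = (1, a_j^{(2)}, z_j^{(2)}) -/
def x2v (S : LagoSetup Ω Pr J1 J2 P Q) (j : Fin J2) : EuclideanSpace ℝ (Fin (1 + P + Q)) :=
  designVec (S.a2 j) (S.z2 j)

/-- random stage-2 design vectors X_j^{(2,n)} = (1, A_j^{(2,n)}, z_j^{(2)}) -/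
def X2v (S : LagoSetup Ω Pr J1 J2 P Q) (n : ℕ) (j : Fin J2) (ω : Ω) :
    EuclideanSpace ℝ (Fin (1 + P + Q)) :=
  designVec (S.A2 n j ω) (S.z2 j)

/-- The LAGO estimating function U_n(β). -/
def U (S : LagoSetup Ω Pr J1 J2 P Q) (n : ℕ) (β : EuclideanSpace ℝ (Fin (1 + P + Q))) (ω : Ω) :
    EuclideanSpace ℝ (Fin (1 + P + Q)) :=
  (n : ℝ)⁻¹ •
    ((∑ j, ∑ i ∈ Finset.range (S.n1 n j),
        (deriv S.h ⟪β, S.x1v j⟫ *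
          (S.h ⟪S.βstar, S.x1v j⟫ + S.ε1 j i ω - S.h ⟪β, S.x1v j⟫)) • S.x1v j) +
      (∑ j, ∑ i ∈ Finset.range (S.n2 n j),
        (deriv S.h ⟪β, S.X2v n j ω⟫ *
          (S.h ⟪S.βstar, S.X2v n j ω⟫ + S.ε2n n j i ω - S.h ⟪β, S.X2v n j ω⟫)) •
          S.X2v n j ω))

/-- The deterministic limit u(β) of the estimating function. -/
def uLim (S : LagoSetup Ω Pr J1 J2 P Q) (β : EuclideanSpace ℝ (Fin (1 + P + Q))) :
    EuclideanSpace ℝ (Fin (1 + P + Q)) :=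
  (∑ j, (S.α1 j * deriv S.h ⟪β, S.x1v j⟫ *
      (S.h ⟪S.βstar, S.x1v j⟫ - S.h ⟪β, S.x1v j⟫)) • S.x1v j) +
    (∑ j, (S.α2 j * deriv S.h ⟪β, S.x2v j⟫ *
      (S.h ⟪S.βstar, S.x2v j⟫ - S.h ⟪β, S.x2v j⟫)) • S.x2v j)

/-- The limiting Jacobian matrix J(β*). -/
def Jmat (S : LagoSetup Ω Pr J1 J2 P Q) : Matrix (Fin (1 + P + Q)) (Fin (1 + P + Q)) ℝ :=
  Matrix.of fun p q =>
    (∑ j, S.α1 j * (deriv S.h ⟪S.βstar, S.x1v j⟫) ^ 2 * (S.x1v j p * S.x1v j q)) +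
      (∑ j, S.α2 j * (deriv S.h ⟪S.βstar, S.x2v j⟫) ^ 2 * (S.x2v j p * S.x2v j q))

/-- The limiting score covariance matrix V(β*). -/
def Vmat (S : LagoSetup Ω Pr J1 J2 P Q) : Matrix (Fin (1 + P + Q)) (Fin (1 + P + Q)) ℝ :=
  Matrix.of fun p q =>
    (∑ j, S.α1 j * S.var1 j * (deriv S.h ⟪S.βstar, S.x1v j⟫) ^ 2 * (S.x1v j p * S.x1v j q)) +
      (∑ j, S.α2 j * S.var2 j * (deriv S.h ⟪S.βstar, S.x2v j⟫) ^ 2 * (S.x2v j p * S.x2v j q))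

end LagoSetup

/-- `μ` is the centered Gaussian law on ℝ^d with covariance matrix `C`
(characterized via all one-dimensional projections, Cramér–Wold). -/
def IsCenteredGaussianLaw {d : ℕ} (μ : Measure (EuclideanSpace ℝ (Fin d)))
    (C : Matrix (Fin d) (Fin d) ℝ) : Prop :=
  IsProbabilityMeasure μ ∧
    ∀ l : EuclideanSpace ℝ (Fin d),
      Measure.map (fun v => ⟪l, v⟫) μ =
        gaussianReal 0 (Real.toNNReal (∑ p, ∑ q, l p * C p q * l q))

/-- Convergence in distribution: weak convergence of the laws. -/
def TendstoInDistribution {Ω : Type} [MeasurableSpace Ω] {E : Type*}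
    [MeasurableSpace E] [TopologicalSpace E]
    (X : ℕ → Ω → E) (Pr : Measure Ω) (μ : Measure E) : Prop :=
  ∀ f : BoundedContinuousFunction E ℝ,
    Tendsto (fun n => ∫ ω, f (X n ω) ∂Pr) atTop (𝓝 (∫ x, f x ∂μ))

/-! Every entry of `Ĵ_n` and `V̂_n` is a continuous function of finitely many random quantities
that converge in probability to constants: the sample fractions `n_j / n → α_j`, the estimate
`β̂_n → β*`, the stage-2 interventions `A_j → a_j`, and, by the strong law of large numbers, the
per-center averages of `ε` and `ε²`. Because all limits are constant, marginal convergence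
already gives joint convergence, and the continuous mapping theorem applies. Expanding the squared
residual `(h⟨β*, x⟩ - h⟨β̂_n, x⟩ + ε)²` isolates the bias `h⟨β*, x⟩ - h⟨β̂_n, x⟩`, which vanishes
at `β*`, so only `α_j σ²(j)` survives. The realized stage-2 errors inherit the law of large
numbers from the coupled i.i.d. arrays through the equality of joint laws. -/

namespace MeasureTheory

variable {Ω ι E F : Type*} [MeasurableSpace Ω] {μ : Measure Ω} {l : Filter ι}
  [PseudoMetricSpace E] [PseudoMetricSpace F]

theorem _root_.Filter.Tendsto.tendstoInMeasure {c : ι → E} {x : E} (hc : Tendsto c l (𝓝 x)) :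
    TendstoInMeasure μ (fun n (_ : Ω) => c n) l (fun _ => x) := by
  rw [tendstoInMeasure_iff_dist]
  intro ε hε
  refine tendsto_const_nhds.congr' ?_
  filter_upwards [Metric.tendsto_nhds.mp hc ε hε] with n hn
  simp [not_le.mpr hn]

theorem TendstoInMeasure.comp_continuousAt {X : ι → Ω → E} {x : E} {φ : E → F}
    (hX : TendstoInMeasure μ X l (fun _ => x)) (hφ : ContinuousAt φ x) :
    TendstoInMeasure μ (fun n ω => φ (X n ω)) l (fun _ => φ x) := by
  rw [tendstoInMeasure_iff_dist] at hX ⊢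
  intro ε hε
  obtain ⟨δ, hδ, hball⟩ := Metric.continuousAt_iff.mp hφ ε hε
  refine tendsto_of_tendsto_of_tendsto_of_le_of_le tendsto_const_nhds (hX δ hδ)
    (fun n => zero_le) (fun n => measure_mono fun ω hω => ?_)
  by_contra hfar
  exact (not_le.mpr (hball (not_le.mp hfar))) hω

theorem TendstoInMeasure.prodMk {X : ι → Ω → E} {Y : ι → Ω → F} {x : E} {y : F}
    (hX : TendstoInMeasure μ X l (fun _ => x)) (hY : TendstoInMeasure μ Y l (fun _ => y)) :
    TendstoInMeasure μ (fun n ω => (X n ω, Y n ω)) l (fun _ => (x, y)) := by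
  rw [tendstoInMeasure_iff_dist] at hX hY ⊢
  intro ε hε
  have hsum := (hX ε hε).add (hY ε hε)
  rw [add_zero] at hsum
  refine tendsto_of_tendsto_of_tendsto_of_le_of_le tendsto_const_nhds hsum
    (fun n => zero_le) (fun n => (measure_mono fun ω hω => ?_).trans (measure_union_le _ _))
  simpa [Prod.dist_eq, le_max_iff] using hω

theorem TendstoInMeasure.add [AddMonoid E] [ContinuousAdd E] {X Y : ι → Ω → E} {x y : E}
    (hX : TendstoInMeasure μ X l (fun _ => x)) (hY : TendstoInMeasure μ Y l (fun _ => y)) :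
    TendstoInMeasure μ (fun n ω => X n ω + Y n ω) l (fun _ => x + y) :=
  (hX.prodMk hY).comp_continuousAt (φ := fun p : E × E => p.1 + p.2) continuous_add.continuousAt

theorem tendstoInMeasure_finset_sum [AddCommMonoid E] [ContinuousAdd E] {κ : Type*}
    (s : Finset κ) {X : κ → ι → Ω → E} {x : κ → E}
    (hX : ∀ j ∈ s, TendstoInMeasure μ (X j) l (fun _ => x j)) :
    TendstoInMeasure μ (fun n ω => ∑ j ∈ s, X j n ω) l (fun _ => ∑ j ∈ s, x j) := by
  classical
  induction s using Finset.induction with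
  | empty => simpa using (tendsto_const_nhds (x := (0 : E)) (f := l)).tendstoInMeasure (μ := μ)
  | insert j s hj ih =>
    simp only [Finset.sum_insert hj]
    exact (hX j (Finset.mem_insert_self j s)).add
      (ih fun k hk => hX k (Finset.mem_insert_of_mem hk))

theorem TendstoInMeasure.of_identDistrib [MeasurableSpace E] [OpensMeasurableSpace E]
    {X Y : ι → Ω → E} {x : E} (hXY : ∀ n, IdentDistrib (X n) (Y n) μ μ)
    (hY : TendstoInMeasure μ Y l (fun _ => x)) :
    TendstoInMeasure μ X l (fun _ => x) := by
  rw [tendstoInMeasure_iff_dist] at hY ⊢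
  intro ε hε
  have hclosed : MeasurableSet {z : E | ε ≤ dist z x} :=
    (isClosed_le continuous_const (continuous_id.dist continuous_const)).measurableSet
  refine (hY ε hε).congr fun n => ?_
  exact ((hXY n).measure_mem_eq hclosed).symm

end MeasureTheory

namespace ProbabilityTheory

variable {Ω ι β : Type*} [MeasurableSpace Ω] {μ : Measure Ω} [MeasurableSpace β] {l : Filter ι}

theorem tendstoInMeasure_sampleMean [IsProbabilityMeasure μ] {X : ℕ → Ω → β} {φ : β → ℝ}
    (hφ : Measurable φ) (hint : Integrable (fun ω => φ (X 0 ω)) μ)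
    (hindep : Pairwise fun i j => IndepFun (X i) (X j) μ)
    (hident : ∀ i, IdentDistrib (X i) (X 0) μ μ) {m : ι → ℕ} (hm : Tendsto m l atTop) :
    TendstoInMeasure μ (fun n ω => (m n : ℝ)⁻¹ * ∑ i ∈ Finset.range (m n), φ (X i ω)) l
      (fun _ => ∫ ω, φ (X 0 ω) ∂μ) := by
  have hident' : ∀ i, IdentDistrib (fun ω => φ (X i ω)) (fun ω => φ (X 0 ω)) μ μ :=
    fun i => (hident i).comp hφ
  have hmeas : ∀ n : ℕ, AEStronglyMeasurable
      (fun ω => (n : ℝ)⁻¹ • ∑ i ∈ Finset.range n, φ (X i ω)) μ := fun n =>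
    (Finset.aestronglyMeasurable_fun_sum _
      fun i _ => (hident' i).aemeasurable_fst.aestronglyMeasurable).fun_const_smul _
  have hlaw := tendstoInMeasure_of_tendsto_ae hmeas <|
    strong_law_ae (fun i ω => φ (X i ω)) hint
      (fun i j hij => (hindep hij).comp hφ hφ) hident'
  exact fun ε hε => (hlaw ε hε).comp hm

theorem tendstoInMeasure_sampleMean_of_abs_le [IsProbabilityMeasure μ] {X : ℕ → Ω → ℝ} {b : ℝ}
    (hX0 : Measurable (X 0)) (hb : ∀ ω, |X 0 ω| ≤ b) {φ : ℝ → ℝ} (hφ : Continuous φ)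
    (hindep : Pairwise fun i j => IndepFun (X i) (X j) μ)
    (hident : ∀ i, IdentDistrib (X i) (X 0) μ μ) {m : ι → ℕ} (hm : Tendsto m l atTop) :
    TendstoInMeasure μ (fun n ω => (m n : ℝ)⁻¹ * ∑ i ∈ Finset.range (m n), φ (X i ω)) l
      (fun _ => ∫ ω, φ (X 0 ω) ∂μ) := by
  obtain ⟨C, hC⟩ :=
    isCompact_Icc.exists_bound_of_continuousOn (hφ.continuousOn (s := Set.Icc (-b) b))
  have hint : Integrable (fun ω => φ (X 0 ω)) μ :=
    Integrable.of_bound (hφ.measurable.comp hX0).aestronglyMeasurable C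
      (ae_of_all _ fun ω => hC _ (abs_le.mp (hb ω)))
  exact tendstoInMeasure_sampleMean hφ.measurable hint hindep hident hm

end ProbabilityTheory

theorem Filter.tendsto_atTop_of_tendsto_div_natCast {m : ℕ → ℕ} {α : ℝ} (hα : 0 < α)
    (hm : Tendsto (fun n => (m n : ℝ) / n) atTop (𝓝 α)) : Tendsto m atTop atTop := by
  rw [← tendsto_natCast_atTop_iff (R := ℝ)]
  refine (hm.pos_mul_atTop hα tendsto_natCast_atTop_atTop).congr' ?_
  filter_upwards [eventually_ne_atTop 0] with n hn
  field_simp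

theorem inv_mul_sum_add_sq (n m : ℕ) (d : ℝ) (e : ℕ → ℝ) :
    (n : ℝ)⁻¹ * ∑ i ∈ Finset.range m, (d + e i) ^ 2 =
      (m : ℝ) / n * ((m : ℝ)⁻¹ * ∑ i ∈ Finset.range m, e i ^ 2 +
        2 * d * ((m : ℝ)⁻¹ * ∑ i ∈ Finset.range m, e i) + d ^ 2) := by
  rcases Nat.eq_zero_or_pos m with rfl | hm
  · simp
  have hexpand : ∑ i ∈ Finset.range m, (d + e i) ^ 2 =
      ∑ i ∈ Finset.range m, e i ^ 2 + 2 * d * ∑ i ∈ Finset.range m, e i + m * d ^ 2 := by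
    simp only [add_sq, Finset.sum_add_distrib, Finset.mul_sum, Finset.sum_const,
      Finset.card_range, nsmul_eq_mul]
    ring
  rw [hexpand]
  field_simp

section

variable {Ω E : Type*} [MeasurableSpace Ω] {μ : Measure Ω} [PseudoMetricSpace E] {l : Filter ℕ}
  {m : ℕ → ℕ} {α : ℝ} {Y : ℕ → Ω → E} {y : E} {g : E → ℝ}

theorem MeasureTheory.TendstoInMeasure.div_mul (hm : Tendsto (fun n => (m n : ℝ) / n) l (𝓝 α))
    (hY : TendstoInMeasure μ Y l (fun _ => y)) (hg : ContinuousAt g y) :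
    TendstoInMeasure μ (fun n ω => (m n : ℝ) / n * g (Y n ω)) l (fun _ => α * g y) :=
  (hm.tendstoInMeasure.prodMk hY).comp_continuousAt (φ := fun x : ℝ × E => x.1 * g x.2)
    (continuousAt_fst.mul (hg.comp continuousAt_snd))

theorem MeasureTheory.TendstoInMeasure.inv_mul_mul_sum_add_sq {e : ℕ → ℕ → Ω → ℝ} {v c : ℝ}
    {d : E → ℝ} (hm : Tendsto (fun n => (m n : ℝ) / n) l (𝓝 α))
    (he2 : TendstoInMeasure μ (fun n ω => (m n : ℝ)⁻¹ * ∑ i ∈ Finset.range (m n), e n i ω ^ 2)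
      l (fun _ => v))
    (he1 : TendstoInMeasure μ (fun n ω => (m n : ℝ)⁻¹ * ∑ i ∈ Finset.range (m n), e n i ω)
      l (fun _ => c))
    (hY : TendstoInMeasure μ Y l (fun _ => y)) (hg : ContinuousAt g y) (hd : ContinuousAt d y)
    (hdy : d y = 0) :
    TendstoInMeasure μ
      (fun (n : ℕ) ω =>
        (n : ℝ)⁻¹ * (g (Y n ω) * ∑ i ∈ Finset.range (m n), (d (Y n ω) + e n i ω) ^ 2))
      l (fun _ => α * (v * g y)) := by
  have hmoments := he2.prodMk he1
  have hconv := (TendstoInMeasure.prodMk (hm.tendstoInMeasure (μ := μ)) hmoments).prodMk hY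
  have hlim := hconv.comp_continuousAt (φ := fun x : (ℝ × ℝ × ℝ) × E =>
      g x.2 * (x.1.1 * (x.1.2.1 + 2 * d x.2 * x.1.2.2 + d x.2 ^ 2))) (by fun_prop)
  rw [show α * (v * g y) = g y * (α * (v + 2 * d y * c + d y ^ 2)) by rw [hdy]; ring]
  convert hlim using 3 with n ω
  rw [mul_left_comm, _root_.inv_mul_sum_add_sq]

end

theorem continuous_designVec {P Q : ℕ} (z : EuclideanSpace ℝ (Fin Q)) :
    Continuous fun a : EuclideanSpace ℝ (Fin P) => designVec a z := by
  unfold designVec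
  fun_prop

namespace LagoSetup

variable {Ω : Type} [MeasurableSpace Ω] {Pr : Measure Ω} {J1 J2 P Q : ℕ}
  (S : LagoSetup Ω Pr J1 J2 P Q)

/-- The `(p, q)` summand of `J` at the design vector `(1, a, z)`, as a function of `(β, a)`. -/
def jacobianTerm (z : EuclideanSpace ℝ (Fin Q)) (p q : Fin (1 + P + Q))
    (βa : EuclideanSpace ℝ (Fin (1 + P + Q)) × EuclideanSpace ℝ (Fin P)) : ℝ :=
  deriv S.h ⟪βa.1, designVec βa.2 z⟫ ^ 2 * (designVec βa.2 z p * designVec βa.2 z q)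

def meanBias (z : EuclideanSpace ℝ (Fin Q))
    (βa : EuclideanSpace ℝ (Fin (1 + P + Q)) × EuclideanSpace ℝ (Fin P)) : ℝ :=
  S.h ⟪S.βstar, designVec βa.2 z⟫ - S.h ⟪βa.1, designVec βa.2 z⟫

theorem continuous_jacobianTerm (z : EuclideanSpace ℝ (Fin Q)) (p q : Fin (1 + P + Q)) :
    Continuous (S.jacobianTerm z p q) := by
  have hh' : Continuous (deriv S.h) := S.h_smooth.continuous_deriv (by norm_num)
  have hx := continuous_designVec (P := P) z
  unfold jacobianTerm
  fun_prop

theorem continuous_meanBias (z : EuclideanSpace ℝ (Fin Q)) : Continuous (S.meanBias z) := by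
  have hh := S.h_smooth.continuous
  have hx := continuous_designVec (P := P) z
  unfold meanBias
  fun_prop

theorem meanBias_βstar (z : EuclideanSpace ℝ (Fin Q)) (a : EuclideanSpace ℝ (Fin P)) :
    S.meanBias z (S.βstar, a) = 0 :=
  sub_self _

theorem pairwise_indepFun_ε1 (j : Fin J1) :
    Pairwise fun i i' => IndepFun (S.ε1 j i) (S.ε1 j i') Pr :=
  fun i i' hii' => S.ε_indep.indepFun (i := .inl (j, i)) (j := .inl (j, i')) (by simpa using hii')

theorem pairwise_indepFun_ε2 (j : Fin J2) :
    Pairwise fun i i' => IndepFun (S.ε2 j i) (S.ε2 j i') Pr :=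
  fun i i' hii' => S.ε_indep.indepFun (i := .inr (j, i)) (j := .inr (j, i')) (by simpa using hii')

theorem identDistrib_ε2n_ε2 (n : ℕ) :
    IdentDistrib (fun ω (p : Fin J2 × ℕ) => S.ε2n n p.1 p.2 ω)
      (fun ω (p : Fin J2 × ℕ) => S.ε2 p.1 p.2 ω) Pr Pr := by
  have hjoint : IdentDistrib
      (fun ω => ((fun p : Fin J1 × ℕ => S.ε1 p.1 p.2 ω), (fun j => S.A2 n j ω),
        (fun p : Fin J2 × ℕ => S.ε2n n p.1 p.2 ω)))
      (fun ω => ((fun p : Fin J1 × ℕ => S.ε1 p.1 p.2 ω), (fun j => S.A2 n j ω),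
        (fun p : Fin J2 × ℕ => S.ε2 p.1 p.2 ω))) Pr Pr :=
    ⟨by have := S.meas_ε1; have := S.measA2; have := S.meas_ε2n; fun_prop,
      by have := S.meas_ε1; have := S.measA2; have := S.meas_ε2; fun_prop, S.jointLaw n⟩
  exact hjoint.comp (measurable_snd.comp measurable_snd)

variable [IsProbabilityMeasure Pr]

theorem tendstoInMeasure_ε1_sampleMean (j : Fin J1) {φ : ℝ → ℝ} (hφ : Continuous φ) :
    TendstoInMeasure Pr
      (fun n ω => (S.n1 n j : ℝ)⁻¹ * ∑ i ∈ Finset.range (S.n1 n j), φ (S.ε1 j i ω)) atTop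
      (fun _ => ∫ ω, φ (S.ε1 j 0 ω) ∂Pr) :=
  tendstoInMeasure_sampleMean_of_abs_le (S.meas_ε1 j 0) (S.ε1_bdd j 0) hφ
    (S.pairwise_indepFun_ε1 j) (S.ε1_ident j)
    (tendsto_atTop_of_tendsto_div_natCast (S.α1_pos j) (S.α1_lim j))

theorem tendstoInMeasure_ε2n_sampleMean (j : Fin J2) {φ : ℝ → ℝ} (hφ : Continuous φ) :
    TendstoInMeasure Pr
      (fun n ω => (S.n2 n j : ℝ)⁻¹ * ∑ i ∈ Finset.range (S.n2 n j), φ (S.ε2n n j i ω)) atTop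
      (fun _ => ∫ ω, φ (S.ε2 j 0 ω) ∂Pr) := by
  have hident : ∀ n, IdentDistrib
      (fun ω => (S.n2 n j : ℝ)⁻¹ * ∑ i ∈ Finset.range (S.n2 n j), φ (S.ε2n n j i ω))
      (fun ω => (S.n2 n j : ℝ)⁻¹ * ∑ i ∈ Finset.range (S.n2 n j), φ (S.ε2 j i ω)) Pr Pr :=
    fun n => (S.identDistrib_ε2n_ε2 n).comp
      (u := fun e : Fin J2 × ℕ → ℝ =>
        (S.n2 n j : ℝ)⁻¹ * ∑ i ∈ Finset.range (S.n2 n j), φ (e (j, i)))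
      (by fun_prop)
  refine TendstoInMeasure.of_identDistrib hident ?_
  exact tendstoInMeasure_sampleMean_of_abs_le (S.meas_ε2 j 0) (S.ε2_bdd j 0) hφ
    (S.pairwise_indepFun_ε2 j) (S.ε2_ident j)
    (tendsto_atTop_of_tendsto_div_natCast (S.α2_pos j) (S.α2_lim j))

end LagoSetup

theorem lago_sandwich_consistency_general
    {Ω : Type} [MeasurableSpace Ω] {Pr : Measure Ω} [IsProbabilityMeasure Pr]
    {J1 J2 P Q : ℕ} (S : LagoSetup Ω Pr J1 J2 P Q)
    (βhat : ℕ → Ω → EuclideanSpace ℝ (Fin (1 + P + Q)))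
    (hβcons : TendstoInMeasure Pr (fun n ω => βhat n ω) atTop (fun _ => S.βstar)) :
    (∀ p q : Fin (1 + P + Q),
      TendstoInMeasure Pr
        (fun (n : ℕ) ω =>
          (∑ j, ((S.n1 n j : ℝ) / n) *
            (deriv S.h ⟪βhat n ω, S.x1v j⟫) ^ 2 * (S.x1v j p * S.x1v j q)) +
          (∑ j, ((S.n2 n j : ℝ) / n) *
            (deriv S.h ⟪βhat n ω, S.X2v n j ω⟫) ^ 2 * (S.X2v n j ω p * S.X2v n j ω q)))
        atTop (fun _ => S.Jmat p q)) ∧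
    (∀ p q : Fin (1 + P + Q),
      TendstoInMeasure Pr
        (fun (n : ℕ) ω =>
          (n : ℝ)⁻¹ *
            ((∑ j, (deriv S.h ⟪βhat n ω, S.x1v j⟫) ^ 2 * (S.x1v j p * S.x1v j q) *
                ∑ i ∈ Finset.range (S.n1 n j),
                  (S.h ⟪S.βstar, S.x1v j⟫ + S.ε1 j i ω - S.h ⟪βhat n ω, S.x1v j⟫) ^ 2) +
              (∑ j, (deriv S.h ⟪βhat n ω, S.X2v n j ω⟫) ^ 2 *
                  (S.X2v n j ω p * S.X2v n j ω q) *
                ∑ i ∈ Finset.range (S.n2 n j),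
                  (S.h ⟪S.βstar, S.X2v n j ω⟫ + S.ε2n n j i ω -
                    S.h ⟪βhat n ω, S.X2v n j ω⟫) ^ 2)))
        atTop (fun _ => S.Vmat p q)) := by
  -- A stage-1 center is a stage-2 center whose intervention is the constant `a_j^{(1)}`.
  have hY1 (j : Fin J1) :=
    hβcons.prodMk (tendsto_const_nhds (x := S.a1 j) (f := atTop)).tendstoInMeasure
  have hY2 (j : Fin J2) := hβcons.prodMk (S.A2_tendsto j)
  refine ⟨fun p q => ?_, fun p q => ?_⟩
  · have hJ1 := tendstoInMeasure_finset_sum Finset.univ fun j _ =>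
      (hY1 j).div_mul (S.α1_lim j) (S.continuous_jacobianTerm (S.z1 j) p q).continuousAt
    have hJ2 := tendstoInMeasure_finset_sum Finset.univ fun j _ =>
      (hY2 j).div_mul (S.α2_lim j) (S.continuous_jacobianTerm (S.z2 j) p q).continuousAt
    simp only [LagoSetup.Jmat, Matrix.of_apply, mul_assoc]
    exact hJ1.add hJ2
  · have hsq1 (j : Fin J1) := S.tendstoInMeasure_ε1_sampleMean j (continuous_pow 2)
    have hmean1 (j : Fin J1) := S.tendstoInMeasure_ε1_sampleMean j continuous_id
    have hsq2 (j : Fin J2) := S.tendstoInMeasure_ε2n_sampleMean j (continuous_pow 2)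
    have hmean2 (j : Fin J2) := S.tendstoInMeasure_ε2n_sampleMean j continuous_id
    simp only [S.ε1_var, S.ε2_var] at hsq1 hsq2
    have hV1 := tendstoInMeasure_finset_sum Finset.univ fun j _ =>
      TendstoInMeasure.inv_mul_mul_sum_add_sq (S.α1_lim j) (hsq1 j) (hmean1 j) (hY1 j)
        (S.continuous_jacobianTerm (S.z1 j) p q).continuousAt
        (S.continuous_meanBias (S.z1 j)).continuousAt (S.meanBias_βstar _ _)
    have hV2 := tendstoInMeasure_finset_sum Finset.univ fun j _ =>
      TendstoInMeasure.inv_mul_mul_sum_add_sq (S.α2_lim j) (hsq2 j) (hmean2 j) (hY2 j)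
        (S.continuous_jacobianTerm (S.z2 j) p q).continuousAt
        (S.continuous_meanBias (S.z2 j)).continuousAt (S.meanBias_βstar _ _)
    convert hV1.add hV2 using 1
    · funext n ω
      rw [mul_add, Finset.mul_sum, Finset.mul_sum]
      simp only [add_sub_right_comm]
      rfl
    · funext
      simp only [LagoSetup.Vmat, Matrix.of_apply, mul_assoc]
      rfl

/-- **Consistency of the sandwich variance estimator:** for B-valued random vectors
β̂_n → β* in probability, the plug-in estimators Ĵ_n and V̂_n converge entrywise in
probability to J(β*) and V(β*). -/
theorem lago_sandwich_consistency
    {Ω : Type} [MeasurableSpace Ω] {Pr : Measure Ω} [IsProbabilityMeasure Pr]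
    {J1 J2 P Q : ℕ} (S : LagoSetup Ω Pr J1 J2 P Q)
    (βhat : ℕ → Ω → EuclideanSpace ℝ (Fin (1 + P + Q)))
    (hβmeas : ∀ n, Measurable (βhat n))
    (hβmem : ∀ n ω, βhat n ω ∈ S.B)
    (hβcons : TendstoInMeasure Pr (fun n ω => βhat n ω) atTop (fun _ => S.βstar)) :
    (∀ p q : Fin (1 + P + Q),
      TendstoInMeasure Pr
        (fun (n : ℕ) ω =>
          (∑ j, ((S.n1 n j : ℝ) / n) *
            (deriv S.h ⟪βhat n ω, S.x1v j⟫) ^ 2 * (S.x1v j p * S.x1v j q)) +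
          (∑ j, ((S.n2 n j : ℝ) / n) *
            (deriv S.h ⟪βhat n ω, S.X2v n j ω⟫) ^ 2 * (S.X2v n j ω p * S.X2v n j ω q)))
        atTop (fun _ => S.Jmat p q)) ∧
    (∀ p q : Fin (1 + P + Q),
      TendstoInMeasure Pr
        (fun (n : ℕ) ω =>
          (n : ℝ)⁻¹ *
            ((∑ j, (deriv S.h ⟪βhat n ω, S.x1v j⟫) ^ 2 * (S.x1v j p * S.x1v j q) *
                ∑ i ∈ Finset.range (S.n1 n j),
                  (S.h ⟪S.βstar, S.x1v j⟫ + S.ε1 j i ω - S.h ⟪βhat n ω, S.x1v j⟫) ^ 2) +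
              (∑ j, (deriv S.h ⟪βhat n ω, S.X2v n j ω⟫) ^ 2 *
                  (S.X2v n j ω p * S.X2v n j ω q) *
                ∑ i ∈ Finset.range (S.n2 n j),
                  (S.h ⟪S.βstar, S.X2v n j ω⟫ + S.ε2n n j i ω -
                    S.h ⟪βhat n ω, S.X2v n j ω⟫) ^ 2)))
        atTop (fun _ => S.Vmat p q)) :=
  lago_sandwich_consistency_general S βhat hβcons
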